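/- There exist positive linear operators S, T : L¹[0,1] → c, where c is the Banach lattice of convergent real sequences with the supremum norm, such that 0 ≤ S ≤ T, T is a weak* Dunford-Pettis operator, and S is not a weak* Dunford-Pettis operator. (In particular, the σ-Dedekind completeness assumption on the range space cannot be dropped in the domination theorem for weak* Dunford-Pettis operators.) -/

import Mathlib

open Filter Topology MeasureTheory

/-- A sequence in a normed space is weakly null if every continuous linear functional
sends it to a null sequence. -/
def WeaklyNull {E : Type*} [NormedAddCommGroup E] [NormedSpace ℝ E] (x : ℕ → E) : Prop :=
  ∀ f : E →L[ℝ] ℝ, Tendsto (fun n => f (x n)) atTop (𝓝 0)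

/-- A sequence of continuous linear functionals is weak* null if it converges to zero
pointwise. -/
def WeakStarNull {F : Type*} [NormedAddCommGroup F] [NormedSpace ℝ F]
    (f : ℕ → F →L[ℝ] ℝ) : Prop :=
  ∀ y : F, Tendsto (fun n => f n y) atTop (𝓝 0)

/-- A bounded linear operator `T : E → F` is a weak* Dunford-Pettis operator if
`f_n (T x_n) → 0` whenever `(x_n)` is weakly null in `E` and `(f_n)` is weak* null in `F*`. -/
def IsWeakStarDunfordPettis {E F : Type*} [NormedAddCommGroup E] [NormedSpace ℝ E]
    [NormedAddCommGroup F] [NormedSpace ℝ F] (T : E →L[ℝ] F) : Prop :=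
  ∀ (x : ℕ → E) (f : ℕ → F →L[ℝ] ℝ), WeaklyNull x → WeakStarNull f →
    Tendsto (fun n => f n (T (x n))) atTop (𝓝 0)

/-- The Banach lattice `L¹[0,1]` of Lebesgue integrable functions on `[0,1]`,
with the `L¹` norm and the pointwise a.e. order. -/
noncomputable abbrev L1unitInterval : Type :=
  Lp ℝ 1 ((volume : Measure ℝ).restrict (Set.Icc (0 : ℝ) 1))

/-- The Banach lattice `c` of convergent real sequences with the supremum norm and the
coordinatewise order, realized as the continuous real-valued functions on the one-point
compactification of `ℕ` (a continuous function on `OnePoint ℕ` is precisely a convergent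
sequence together with its limit, the norm is the sup norm and the order is pointwise). -/
abbrev ConvergentSeq : Type := C(OnePoint ℕ, ℝ)

/-!
Let `T x = (∫ x) • 1`, a rank-one operator and hence weak* Dunford-Pettis, and let
`C x = (∫ cos (2πnt) x(t) dt)ₙ`, which is a convergent (indeed null) sequence by the
Riemann-Lebesgue lemma. Since `|C x| ≤ T x` for `x ≥ 0`, the operator `S = (T + C) / 2`
satisfies `0 ≤ S ≤ T`. The cosines `xₙ = cos (2πn·)` are weakly null in `L¹` (they are weakly null
in `L²`, again by Riemann-Lebesgue, and `L² ↪ L¹` is continuous) and `fₙ = δₙ - δ_∞` is weak* null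
in `c*`, but `fₙ (C xₙ) = ∫ cos² (2πn·) = 1/2`. So `C = 2S - T`, and hence `S`, is not
weak* Dunford-Pettis.
-/

open Real Set
open scoped ENNReal

section WeakStarDunfordPettis

variable {E F : Type*} [NormedAddCommGroup E] [NormedSpace ℝ E]
  [NormedAddCommGroup F] [NormedSpace ℝ F]

theorem WeaklyNull.map {x : ℕ → E} (hx : WeaklyNull x) (T : E →L[ℝ] F) :
    WeaklyNull fun n => T (x n) :=
  fun f => hx (f.comp T)

theorem WeaklyNull.of_tendsto_inner {H : Type*} [NormedAddCommGroup H] [InnerProductSpace ℝ H]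
    [CompleteSpace H] {x : ℕ → H}
    (hx : ∀ g : H, Tendsto (fun n => inner ℝ g (x n)) atTop (𝓝 0)) : WeaklyNull x := fun f => by
  simpa only [InnerProductSpace.toDual_symm_apply] using
    hx ((InnerProductSpace.toDual ℝ H).symm f)

theorem isWeakStarDunfordPettis_smulRight (φ : E →L[ℝ] ℝ) (y : F) :
    IsWeakStarDunfordPettis (φ.smulRight y) := fun x f hx hf => by
  simpa using (hx φ).mul (hf y)

theorem IsWeakStarDunfordPettis.sub {S T : E →L[ℝ] F} (hS : IsWeakStarDunfordPettis S)
    (hT : IsWeakStarDunfordPettis T) : IsWeakStarDunfordPettis (S - T) := fun x f hx hf => by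
  simpa using (hS x f hx hf).sub (hT x f hx hf)

theorem IsWeakStarDunfordPettis.const_smul {T : E →L[ℝ] F} (hT : IsWeakStarDunfordPettis T)
    (c : ℝ) : IsWeakStarDunfordPettis (c • T) := fun x f hx hf => by
  simpa using (hT x f hx hf).const_mul c

theorem weakStarNull_evalCLM_sub_evalCLM_infty :
    WeakStarNull fun n : ℕ =>
      ContinuousMap.evalCLM ℝ (n : OnePoint ℕ) - ContinuousMap.evalCLM ℝ OnePoint.infty :=
  fun y => by
    simpa using ((OnePoint.continuous_iff_from_nat y).mp y.continuous).sub_const (y OnePoint.infty)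

end WeakStarDunfordPettis

namespace ContinuousLinearMap

variable {E : Type*} [NormedAddCommGroup E] [NormedSpace ℝ E] [CompleteSpace E]

noncomputable def seqOfTendsto (φ : ℕ → StrongDual ℝ E) (ψ : StrongDual ℝ E)
    (h : ∀ x, Tendsto (fun m => φ m x) atTop (𝓝 (ψ x))) : E →L[ℝ] ConvergentSeq :=
  LinearMap.mkContinuousOfExistsBound
    { toFun x := OnePoint.continuousMapMkNat (fun m => φ m x) (ψ x) (h x)
      map_add' x y := by
        ext p
        induction p using OnePoint.rec with
        | infty => exact map_add ψ x y
        | coe m => exact map_add (φ m) x y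
      map_smul' c x := by
        ext p
        induction p using OnePoint.rec with
        | infty => exact map_smul ψ c x
        | coe m => exact map_smul (φ m) c x }
    (by
      obtain ⟨C, hC⟩ := banach_steinhaus fun x =>
        (isBounded_iff_forall_norm_le.mp (Metric.isBounded_range_of_tendsto _ (h x))).imp
          fun _ hC m => hC _ (mem_range_self m)
      refine ⟨C, fun x => (ContinuousMap.norm_le_of_nonempty _).mpr fun p => ?_⟩
      induction p using OnePoint.rec with
      | infty => exact le_of_tendsto' (h x).norm fun m => (φ m).le_of_opNorm_le (hC m) x
      | coe m => exact (φ m).le_of_opNorm_le (hC m) x)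

@[simp]
theorem seqOfTendsto_apply_coe (φ : ℕ → StrongDual ℝ E) (ψ : StrongDual ℝ E)
    (h : ∀ x, Tendsto (fun m => φ m x) atTop (𝓝 (ψ x))) (x : E) (m : ℕ) :
    seqOfTendsto φ ψ h x m = φ m x :=
  rfl

@[simp]
theorem seqOfTendsto_apply_infty (φ : ℕ → StrongDual ℝ E) (ψ : StrongDual ℝ E)
    (h : ∀ x, Tendsto (fun m => φ m x) atTop (𝓝 (ψ x))) (x : E) :
    seqOfTendsto φ ψ h x OnePoint.infty = ψ x :=
  rfl

end ContinuousLinearMap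

namespace MeasureTheory.Lp

variable {α E : Type*} [MeasurableSpace α] {μ : Measure α} [IsProbabilityMeasure μ]
  [NormedAddCommGroup E] [NormedSpace ℝ E] {p q : ℝ≥0∞} [Fact (1 ≤ p)] [Fact (1 ≤ q)]

noncomputable def inclusionOfLE (hqp : q ≤ p) : Lp E p μ →L[ℝ] Lp E q μ :=
  LinearMap.mkContinuous
    { toFun f := ((Lp.memLp f).mono_exponent hqp).toLp f
      map_add' f g := by
        rw [← MemLp.toLp_add]
        exact MemLp.toLp_congr _ _ (Lp.coeFn_add f g)
      map_smul' c f := by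
        rw [RingHom.id_apply, ← MemLp.toLp_const_smul]
        exact MemLp.toLp_congr _ _ (Lp.coeFn_smul c f) }
    1 fun f => by
      simp only [LinearMap.coe_mk, AddHom.coe_mk, one_mul, Lp.norm_def,
        eLpNorm_congr_ae (MemLp.coeFn_toLp ((Lp.memLp f).mono_exponent hqp))]
      exact ENNReal.toReal_mono (Lp.eLpNorm_ne_top f)
        (eLpNorm_le_eLpNorm_of_exponent_le hqp (Lp.aestronglyMeasurable f))

theorem coeFn_inclusionOfLE (hqp : q ≤ p) (f : Lp E p μ) : inclusionOfLE hqp f =ᵐ[μ] f :=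
  MemLp.coeFn_toLp ((Lp.memLp f).mono_exponent hqp)

end MeasureTheory.Lp

theorem Real.tendsto_integral_cos_mul_cocompact {f : ℝ → ℝ} (hf : Integrable f) :
    Tendsto (fun w : ℝ => ∫ t, cos (2 * π * w * t) * f t) (cocompact ℝ) (𝓝 0) := by
  have h := (Complex.continuous_re.tendsto 0).comp
    (Real.tendsto_integral_exp_smul_cocompact fun t => (f t : ℂ))
  refine (h.congr fun w => ?_).trans (by simp)
  have hint : Integrable fun v : ℝ => fourierChar (-(v * w)) • (f v : ℂ) := by
    simpa [mul_comm] using (Real.fourierIntegral_convergent_iff w).2 hf.ofReal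
  rw [Function.comp_apply, ← Complex.reCLM_apply, ← Complex.reCLM.integral_comp_comm hint]
  congr 1 with t
  rw [Circle.smul_def, Real.fourierChar_apply, smul_eq_mul, Complex.reCLM_apply,
    Complex.re_mul_ofReal, Complex.exp_ofReal_mul_I_re,
    show 2 * π * -(t * w) = -(2 * π * w * t) by ring, cos_neg]

theorem tendsto_setIntegral_cos_mul_atTop {s : Set ℝ} (hs : MeasurableSet s) {f : ℝ → ℝ}
    (hf : IntegrableOn f s) :
    Tendsto (fun n : ℕ => ∫ t in s, cos (2 * π * n * t) * f t) atTop (𝓝 0) := by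
  refine ((Real.tendsto_integral_cos_mul_cocompact ((integrable_indicator_iff hs).2 hf)).comp
    (tendsto_natCast_atTop_atTop.mono_right atTop_le_cocompact)).congr fun n => ?_
  simp only [Function.comp_apply, ← integral_indicator hs, indicator_mul_right]

local notation "μ₀" => Measure.restrict (volume : Measure ℝ) (Icc (0 : ℝ) 1)

instance : IsProbabilityMeasure μ₀ := ⟨by simp⟩

theorem memLp_cos_two_pi_mul {μ : Measure ℝ} [IsFiniteMeasure μ] (p : ℝ≥0∞) (n : ℕ) :
    MemLp (fun t => cos (2 * π * n * t)) p μ :=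
  .of_bound (by fun_prop : Continuous _).aestronglyMeasurable 1
    (.of_forall fun t => by simpa using abs_cos_le_one _)

noncomputable def cosLp (p : ℝ≥0∞) (n : ℕ) : Lp ℝ p μ₀ :=
  (memLp_cos_two_pi_mul p n).toLp _

theorem coeFn_cosLp (p : ℝ≥0∞) (n : ℕ) : cosLp p n =ᵐ[μ₀] fun t => cos (2 * π * n * t) :=
  MemLp.coeFn_toLp _

theorem weaklyNull_cosLp_two : WeaklyNull (cosLp 2) := .of_tendsto_inner fun g => by
  refine (tendsto_setIntegral_cos_mul_atTop measurableSet_Icc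
    ((Lp.memLp g).integrable one_le_two)).congr fun n => ?_
  rw [L2.inner_def]
  refine integral_congr_ae ?_
  filter_upwards [coeFn_cosLp 2 n] with t ht
  simp [ht, mul_comm]

theorem weaklyNull_cosLp_one : WeaklyNull (cosLp 1) := by
  convert weaklyNull_cosLp_two.map (Lp.inclusionOfLE one_le_two) using 2 with n
  exact Lp.ext <| (coeFn_cosLp 1 n).trans
    ((Lp.coeFn_inclusionOfLE _ (cosLp 2 n)).trans (coeFn_cosLp 2 n)).symm

noncomputable def cosineCoeff (n : ℕ) : StrongDual ℝ L1unitInterval :=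
  (ContinuousLinearMap.mul ℝ ℝ).lpPairing μ₀ ∞ 1 (cosLp ∞ n)

theorem cosineCoeff_apply (n : ℕ) (x : L1unitInterval) :
    cosineCoeff n x = ∫ t, cos (2 * π * n * t) * x t ∂μ₀ := by
  rw [cosineCoeff, ContinuousLinearMap.lpPairing_eq_integral]
  refine integral_congr_ae ?_
  filter_upwards [coeFn_cosLp ∞ n] with t ht
  simp [ht]

theorem integral_cos_two_pi_mul_sq {n : ℕ} (hn : n ≠ 0) :
    ∫ t, cos (2 * π * n * t) * cos (2 * π * n * t) ∂μ₀ = 1 / 2 := by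
  have hc : 2 * π * n ≠ 0 := by positivity
  have hsin : sin (2 * π * n) = 0 := by
    simpa [mul_comm, mul_assoc, mul_left_comm] using sin_nat_mul_pi (2 * n)
  simp_rw [← sq]
  rw [integral_Icc_eq_integral_Ioc, ← intervalIntegral.integral_of_le zero_le_one,
    intervalIntegral.integral_comp_mul_left (fun x => cos x ^ 2) hc, integral_cos_sq]
  simp only [hsin, mul_zero, mul_one, sin_zero, cos_zero, smul_eq_mul]
  field_simp
  ring

theorem cosineCoeff_cosLp_self {n : ℕ} (hn : n ≠ 0) : cosineCoeff n (cosLp 1 n) = 1 / 2 := by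
  rw [cosineCoeff_apply, ← integral_cos_two_pi_mul_sq hn]
  refine integral_congr_ae ?_
  filter_upwards [coeFn_cosLp 1 n] with t ht
  rw [ht]

noncomputable def integralConst : L1unitInterval →L[ℝ] ConvergentSeq :=
  L1.integralCLM.smulRight 1

theorem integralConst_apply (x : L1unitInterval) (p : OnePoint ℕ) :
    integralConst x p = ∫ t, x t ∂μ₀ := by
  simp [integralConst, ← L1.integral_eq, L1.integral_eq_integral]

theorem isWeakStarDunfordPettis_integralConst : IsWeakStarDunfordPettis integralConst :=
  isWeakStarDunfordPettis_smulRight _ _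

noncomputable def cosineCoeffs : L1unitInterval →L[ℝ] ConvergentSeq :=
  .seqOfTendsto cosineCoeff 0 fun x => by
    simpa only [cosineCoeff_apply, zero_apply] using
      tendsto_setIntegral_cos_mul_atTop measurableSet_Icc (L1.integrable_coeFn x)

theorem abs_cosineCoeffs_apply_le {x : L1unitInterval} (hx : 0 ≤ x) (p : OnePoint ℕ) :
    |cosineCoeffs x p| ≤ integralConst x p := by
  have hx' : (0 : ℝ → ℝ) ≤ᵐ[μ₀] x := (Lp.coeFn_nonneg x).2 hx
  rw [integralConst_apply]
  induction p using OnePoint.rec with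
  | infty => simpa [cosineCoeffs] using integral_nonneg_of_ae hx'
  | coe n =>
    rw [cosineCoeffs, ContinuousLinearMap.seqOfTendsto_apply_coe, cosineCoeff_apply,
      ← Real.norm_eq_abs]
    refine norm_integral_le_of_norm_le (L1.integrable_coeFn x) ?_
    filter_upwards [hx'] with t ht
    simpa [abs_of_nonneg ht] using mul_le_mul_of_nonneg_right (abs_cos_le_one _) ht

theorem not_isWeakStarDunfordPettis_cosineCoeffs : ¬ IsWeakStarDunfordPettis cosineCoeffs := by
  intro h
  have hnull := h _ _ weaklyNull_cosLp_one weakStarNull_evalCLM_sub_evalCLM_infty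
  have hhalf : ∀ᶠ n : ℕ in atTop,
      cosineCoeffs (cosLp 1 n) n - cosineCoeffs (cosLp 1 n) OnePoint.infty = 1 / 2 :=
    (eventually_ne_atTop 0).mono fun n hn => by
      simp [cosineCoeffs, cosineCoeff_cosLp_self hn]
  have := tendsto_nhds_unique (hnull.congr' hhalf) tendsto_const_nhds
  norm_num at this

/-- **The σ-Dedekind completeness assumption on the range cannot be dropped.**
There exist positive operators `S, T : L¹[0,1] → c` with `0 ≤ S ≤ T` such that `T` is a
weak* Dunford-Pettis operator while `S` is not. -/
theorem exists_dominated_not_weakStarDunfordPettis :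
    ∃ S T : L1unitInterval →L[ℝ] ConvergentSeq,
      (∀ x : L1unitInterval, 0 ≤ x → 0 ≤ S x) ∧
      (∀ x : L1unitInterval, 0 ≤ x → S x ≤ T x) ∧
      IsWeakStarDunfordPettis T ∧
      ¬ IsWeakStarDunfordPettis S := by
  have hS_apply (x : L1unitInterval) (p : OnePoint ℕ) :
      ((1 / 2 : ℝ) • (integralConst + cosineCoeffs)) x p =
        (integralConst x p + cosineCoeffs x p) / 2 := by
    simp only [smul_apply, add_apply, ContinuousMap.smul_apply, ContinuousMap.add_apply,
      smul_eq_mul]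
    ring
  refine ⟨(1 / 2 : ℝ) • (integralConst + cosineCoeffs), integralConst,
    fun x hx => ContinuousMap.le_def.mpr fun p => ?_,
    fun x hx => ContinuousMap.le_def.mpr fun p => ?_,
    isWeakStarDunfordPettis_integralConst, fun hS => ?_⟩
  · rw [hS_apply, ContinuousMap.zero_apply]
    linarith [abs_le.mp (abs_cosineCoeffs_apply_le hx p)]
  · rw [hS_apply]
    linarith [abs_le.mp (abs_cosineCoeffs_apply_le hx p)]
  · refine not_isWeakStarDunfordPettis_cosineCoeffs ?_
    convert (hS.const_smul 2).sub isWeakStarDunfordPettis_integralConst using 1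
    rw [smul_smul]
    norm_num
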